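/- arXiv:2403.10497 — 2 statements merged into one kernel-verified Lean document; each statement's English description precedes it below -/
import Mathlib

section
/- Let k : 𝕏 × 𝕏 → ℝ be a measurable, bounded, positive definite kernel with RKHS H, and let p be a probability measure on 𝕏 with ∫ √(k(x,x)) dp(x) < ∞. Then the mean embedding μ_p := ∫ k(·,x) dp(x) (Bochner integral) belongs to H, and for every f ∈ H, ∫ f dp = ⟨f, μ_p⟩_H. -/
open MeasureTheory
open scoped RealInnerProductSpace

/-- Kernel mean embedding of a probability measure: for a measurable bounded kernel
`k` with RKHS `H` (realized by `Φ : H → 𝕏 → ℝ`, feature map `kf x = k(·,x)`) and a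
probability measure `p` with `∫ √(k(x,x)) dp(x) < ∞`, the Bochner integral
`μ_p = ∫ kf x dp(x)` exists in `H` and satisfies `∫ f dp = ⟪f, μ_p⟫` for all `f ∈ H`. -/
theorem mean_embedding_exists_and_reproduces
    {𝕏 H : Type*} [MeasurableSpace 𝕏] [NormedAddCommGroup H]
    [InnerProductSpace ℝ H] [CompleteSpace H]
    (Φ : H → 𝕏 → ℝ) (kf : 𝕏 → H) (k : 𝕏 → 𝕏 → ℝ)
    (hk : ∀ x y : 𝕏, k x y = ⟪kf x, kf y⟫)
    (hrepro : ∀ (f : H) (x : 𝕏), Φ f x = ⟪f, kf x⟫)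
    (hkmeas : ∀ f : H, Measurable (Φ f))
    (hkfmeas : StronglyMeasurable kf)  -- measurability of the feature map
    (hbdd : ∃ C : ℝ, ∀ x y : 𝕏, |k x y| ≤ C)
    (p : Measure 𝕏) [IsProbabilityMeasure p]
    (hint : Integrable (fun x => Real.sqrt (k x x)) p) :
    Integrable kf p ∧ ∀ f : H, (∫ x, Φ f x ∂p) = ⟪f, ∫ x, kf x ∂p⟫ := by
  have hnorm : ∀ x, ‖kf x‖ = Real.sqrt (k x x) := by
    intro x
    rw [hk, real_inner_self_eq_norm_sq, Real.sqrt_sq (norm_nonneg _)]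
  have hI : Integrable kf p := by
    refine ⟨hkfmeas.aestronglyMeasurable, ?_⟩
    refine hint.hasFiniteIntegral.congr' ?_
    filter_upwards with x using by rw [hnorm x, Real.norm_of_nonneg (Real.sqrt_nonneg _)]
  refine ⟨hI, fun f => ?_⟩
  simp_rw [hrepro f]
  exact integral_inner hI f
end

section
/- Let t be a probability kernel on 𝕏, let μ_t ∈ 𝒢 denote its conditional mean embedding into the vector-valued RKHS 𝒢 with kernel Γ(x,x') = k_x(x,x')Id_{H₊}, and let μ̂ ∈ 𝒢 with ‖μ_t − μ̂‖_𝒢 ≤ ε. Suppose B ∈ H₊, B ≥ 0, ‖B‖_{H₊} ≤ B̄, and for all x ∈ 𝕏: ⟨B, μ̂(x)⟩_{H₊} − B(x) ≤ c − ε·B̄·√(k_x(x,x)) for some c ≥ 0. Then for all x ∈ 𝕏, ∫ B(y) t(x, dy) − B(x) ≤ c, i.e., B satisfies the c-supermartingale barrier condition for the true kernel t. -/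
open MeasureTheory ProbabilityTheory
open scoped RealInnerProductSpace

/-- Theorem 2 (deterministic core): if the conditional mean embedding `μt` of the
unknown transition kernel `t` lies within a `𝒢`-ball of radius `ε` around an
empirical estimate `μ̂`, and the tightened drift inequality
`⟪B, μ̂(x)⟫ − B(x) ≤ c − ε·B̄·√(k_x(x,x))` holds for all `x`, then `B` satisfies
the `c`-supermartingale barrier condition `∫ B(y) t(x,dy) − B(x) ≤ c` for the
true kernel `t`. Here the vector-valued RKHS `𝒢` (type `G`) has point
evaluations `ev` and diagonal operator-valued kernel `Γ(x,x') = k(x,x')·Id`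
characterized via `Γmap` as in the reproducing property `hrepro`. -/
theorem cme_ambiguity_implies_barrier_drift
    {𝕏 H G : Type*} [MeasurableSpace 𝕏]
    [NormedAddCommGroup H] [InnerProductSpace ℝ H]
    [NormedAddCommGroup G] [InnerProductSpace ℝ G]
    (t : ProbabilityTheory.Kernel 𝕏 𝕏) [ProbabilityTheory.IsMarkovKernel t]
    (Φ : H → 𝕏 → ℝ)                      -- realization of H₊ as functions on 𝕏
    (ev : G → 𝕏 → H) (Γmap : 𝕏 → H → G) (k : 𝕏 → 𝕏 → ℝ)
    (hrepro : ∀ (g : G) (x : 𝕏) (B : H), ⟪B, ev g x⟫ = ⟪Γmap x B, g⟫)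
    (hlin : ∀ (g g' : G) (x : 𝕏), ev (g - g') x = ev g x - ev g' x)
    (hdiag : ∀ (x x' : 𝕏) (B : H), ev (Γmap x B) x' = k x x' • B)
    (μt μhat : G)
    (hCME : ∀ (f : H) (x : 𝕏), (∫ y, Φ f y ∂(t x)) = ⟪f, ev μt x⟫)
    (ε : ℝ) (hball : ‖μt - μhat‖ ≤ ε)
    (B : H) (Bbar c : ℝ) (hc : 0 ≤ c)
    (hpos : ∀ x : 𝕏, 0 ≤ Φ B x) (hnorm : ‖B‖ ≤ Bbar)
    (hdrift : ∀ x : 𝕏,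
      ⟪B, ev μhat x⟫ - Φ B x ≤ c - ε * Bbar * Real.sqrt (k x x)) :
    ∀ x : 𝕏, (∫ y, Φ B y ∂(t x)) - Φ B x ≤ c := by
  intro x
  have hεnn : 0 ≤ ε := le_trans (norm_nonneg _) hball
  have hBbar : 0 ≤ Bbar := le_trans (norm_nonneg _) hnorm
  have hΓnorm : ‖Γmap x B‖ = Real.sqrt (k x x) * ‖B‖ := by
    have h1 : ‖Γmap x B‖ ^ 2 = k x x * ‖B‖ ^ 2 := by
      have := hrepro (Γmap x B) x B
      rw [hdiag, real_inner_smul_right, real_inner_self_eq_norm_sq] at this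
      rw [← real_inner_self_eq_norm_sq, real_inner_comm, this]
    have h2 : ‖Γmap x B‖ = Real.sqrt (k x x * ‖B‖ ^ 2) := by
      rw [← h1, Real.sqrt_sq (norm_nonneg _)]
    rw [h2, Real.sqrt_mul' _ (sq_nonneg _), Real.sqrt_sq (norm_nonneg _)]
  have hgap : ⟪B, ev μt x⟫ - ⟪B, ev μhat x⟫ ≤ ε * Bbar * Real.sqrt (k x x) := by
    have h3 : ⟪B, ev μt x⟫ - ⟪B, ev μhat x⟫ = ⟪Γmap x B, μt - μhat⟫ := by
      rw [← hrepro, hlin, inner_sub_right]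
    rw [h3]
    calc ⟪Γmap x B, μt - μhat⟫ ≤ ‖Γmap x B‖ * ‖μt - μhat‖ :=
          real_inner_le_norm _ _
      _ ≤ (Real.sqrt (k x x) * Bbar) * ε := by
          rw [hΓnorm]
          exact mul_le_mul (mul_le_mul_of_nonneg_left hnorm (Real.sqrt_nonneg _))
            hball (norm_nonneg _)
            (mul_nonneg (Real.sqrt_nonneg _) hBbar)
      _ = ε * Bbar * Real.sqrt (k x x) := by ring
  have := hdrift x
  rw [hCME B x]
  linarith
end
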